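/- arXiv:1407.4663 — 7 statements merged into one kernel-verified Lean document; each statement's English description precedes it below -/
import Mathlib

section
/- For every positive integer ℓ, a graph with minimum degree δ has 2^ℓ pairwise edge-disjoint spanning subgraphs, each with minimum degree at least (δ - 2^{ℓ+1} + 2)/2^ℓ. -/
/-!
Split the edges of a graph into two spanning subgraphs whose degrees differ by at most two at
every vertex. Take a longest trail: every edge at either of its ends lies on it. Colour its edges
alternately; each passage through a vertex gets one edge of each colour, so only the ends become
unbalanced, by at most two, and the ends have no edges left in the rest of the graph, which is
split by induction on the number of edges. A vertex of degree `d` keeps degree at least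
`(d - 2) / 2` in each half, and halving `ℓ` times gives the bound `(δ + 2) / 2 ^ ℓ - 2`.
-/

open Finset

namespace SimpleGraph

variable {V : Type*}

structure IsEdgeSplit (G A B : SimpleGraph V) : Prop where
  sup_eq : A ⊔ B = G
  disjoint : Disjoint A.edgeSet B.edgeSet

noncomputable def imbalance (A B : SimpleGraph V) (v : V) : ℤ :=
  (A.neighborSet v).ncard - (B.neighborSet v).ncard

namespace IsEdgeSplit

variable {G A B G₁ A₁ B₁ G₂ A₂ B₂ : SimpleGraph V}

lemma left_le (h : IsEdgeSplit G A B) : A ≤ G := h.sup_eq ▸ le_sup_left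

lemma right_le (h : IsEdgeSplit G A B) : B ≤ G := h.sup_eq ▸ le_sup_right

lemma sup (h₁ : IsEdgeSplit G₁ A₁ B₁) (h₂ : IsEdgeSplit G₂ A₂ B₂)
    (h : Disjoint G₁.edgeSet G₂.edgeSet) : IsEdgeSplit (G₁ ⊔ G₂) (A₁ ⊔ A₂) (B₁ ⊔ B₂) where
  sup_eq := by rw [sup_sup_sup_comm, h₁.sup_eq, h₂.sup_eq]
  disjoint := by
    rw [edgeSet_sup, edgeSet_sup, Set.disjoint_union_left, Set.disjoint_union_right,
      Set.disjoint_union_right]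
    exact ⟨⟨h₁.disjoint, h.mono (edgeSet_mono h₁.left_le) (edgeSet_mono h₂.right_le)⟩,
      h.symm.mono (edgeSet_mono h₂.left_le) (edgeSet_mono h₁.right_le), h₂.disjoint⟩

end IsEdgeSplit

lemma pairwise_disjoint_edgeSet_uncurry {ι κ : Type*} {H : ι → SimpleGraph V}
    {K : ι → κ → SimpleGraph V}
    (hH : Pairwise fun i i' => Disjoint (H i).edgeSet (H i').edgeSet) (hKH : ∀ i j, K i j ≤ H i)
    (hK : ∀ i, Pairwise fun j j' => Disjoint (K i j).edgeSet (K i j').edgeSet) :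
    Pairwise fun p q : ι × κ => Disjoint (K p.1 p.2).edgeSet (K q.1 q.2).edgeSet := by
  rintro ⟨i, j⟩ ⟨i', j'⟩ hne
  by_cases hi : i = i'
  · subst hi
    exact hK i fun hj => hne (congrArg _ hj)
  · exact (hH hi).mono (edgeSet_mono (hKH i j)) (edgeSet_mono (hKH i' j'))

lemma ncard_neighborSet_fromEdgeSet [DecidableEq V] (S : Finset (Sym2 V))
    (hS : ∀ e ∈ S, ¬e.IsDiag) (v : V) :
    ((fromEdgeSet (S : Set (Sym2 V))).neighborSet v).ncard = #{e ∈ S | v ∈ e} := by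
  have : (fromEdgeSet (S : Set (Sym2 V))).incidenceSet v = ↑{e ∈ S | v ∈ e} := by
    ext e
    simp +contextual [incidenceSet, hS]
  rw [← Set.ncard_coe_finset, ← this, ← Nat.card_coe_set_eq, ← Nat.card_coe_set_eq]
  exact Nat.card_congr ((fromEdgeSet _).incidenceSetEquivNeighborSet v).symm

lemma neighborSet_deleteEdges_eq_empty {G : SimpleGraph V} {s : Set (Sym2 V)} {v : V}
    (h : ∀ x, G.Adj v x → s(v, x) ∈ s) : (G.deleteEdges s).neighborSet v = ∅ :=
  Set.eq_empty_of_forall_notMem fun x hx => by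
    rw [mem_neighborSet, deleteEdges_adj] at hx
    exact hx.2 (h x hx.1)

namespace Walk

variable [DecidableEq V] {G : SimpleGraph V} {u w : V}

/-- The edges in odd positions of `p` (first, third, …) for `true`, in even positions for
`false`. -/
def alternateEdges : {u w : V} → G.Walk u w → Bool → Finset (Sym2 V)
  | _, _, nil, _ => ∅
  | _, _, cons (u := u) (v := v) _ q, true => insert s(u, v) (q.alternateEdges false)
  | _, _, cons _ q, false => q.alternateEdges true

lemma alternateEdges_subset (p : G.Walk u w) (b : Bool) :
    p.alternateEdges b ⊆ p.edges.toFinset := by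
  induction p generalizing b with
  | nil => simp [alternateEdges]
  | cons h q ih =>
    cases b
    · exact (ih true).trans (by simp)
    · simpa [alternateEdges] using insert_subset_insert _ (ih false)

lemma alternateEdges_union (p : G.Walk u w) :
    p.alternateEdges true ∪ p.alternateEdges false = p.edges.toFinset := by
  induction p with
  | nil => simp [alternateEdges]
  | cons h q ih =>
    rw [alternateEdges, alternateEdges, edges_cons, List.toFinset_cons, insert_union, union_comm,
      ih]

lemma IsTrail.disjoint_alternateEdges {p : G.Walk u w} (hp : p.IsTrail) :
    Disjoint (p.alternateEdges true) (p.alternateEdges false) := by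
  induction p with
  | nil => simp [alternateEdges]
  | cons h q ih =>
    rw [isTrail_cons] at hp
    rw [alternateEdges, alternateEdges, disjoint_insert_left]
    exact ⟨fun he => hp.2 (by simpa using q.alternateEdges_subset true he), (ih hp.1).symm⟩

lemma IsTrail.card_alternateEdges_sub {p : G.Walk u w} (hp : p.IsTrail) (x : V) :
    (#{e ∈ p.alternateEdges true | x ∈ e} : ℤ) - #{e ∈ p.alternateEdges false | x ∈ e} =
      (if x = u then 1 else 0) - (-1) ^ p.length * (if x = w then 1 else 0) := by
  induction p with
  | nil => simp [alternateEdges]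
  | @cons u v w h q ih =>
    rw [isTrail_cons] at hp
    have hnew : s(u, v) ∉ q.alternateEdges false :=
      fun he => hp.2 (by simpa using q.alternateEdges_subset false he)
    have hcard : (#{e ∈ insert s(u, v) (q.alternateEdges false) | x ∈ e} : ℤ) =
        (if x = u then 1 else 0) + (if x = v then 1 else 0) +
          #{e ∈ q.alternateEdges false | x ∈ e} := by
      rw [filter_insert]
      have := h.ne
      split_ifs <;> simp_all [card_insert_of_notMem, add_comm]
    rw [alternateEdges, alternateEdges, hcard, length_cons, pow_succ]
    linear_combination -(ih hp.1)

lemma IsTrail.isEdgeSplit_alternateEdges {p : G.Walk u w} (hp : p.IsTrail) :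
    IsEdgeSplit (fromEdgeSet (p.edges.toFinset : Set (Sym2 V)))
      (fromEdgeSet (p.alternateEdges true : Set (Sym2 V)))
      (fromEdgeSet (p.alternateEdges false : Set (Sym2 V))) where
  sup_eq := by rw [← fromEdgeSet_union, ← coe_union, alternateEdges_union]
  disjoint := by
    rw [edgeSet_fromEdgeSet, edgeSet_fromEdgeSet]
    exact (disjoint_coe.mpr hp.disjoint_alternateEdges).mono Set.sdiff_subset Set.sdiff_subset

lemma IsTrail.imbalance_alternateEdges {p : G.Walk u w} (hp : p.IsTrail) (x : V) :
    imbalance (fromEdgeSet (p.alternateEdges true : Set (Sym2 V)))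
        (fromEdgeSet (p.alternateEdges false : Set (Sym2 V))) x =
      (if x = u then 1 else 0) - (-1) ^ p.length * (if x = w then 1 else 0) := by
  have hS (b : Bool) : ∀ e ∈ p.alternateEdges b, ¬e.IsDiag := fun _ he =>
    G.not_isDiag_of_mem_edgeSet <|
      p.edges_subset_edgeSet (by simpa using p.alternateEdges_subset b he)
  rw [imbalance, ncard_neighborSet_fromEdgeSet _ (hS true),
    ncard_neighborSet_fromEdgeSet _ (hS false), hp.card_alternateEdges_sub]

lemma IsTrail.mem_edges_of_forall_length_le {p : G.Walk u w} (hp : p.IsTrail)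
    (hmax : ∀ (u' w' : V) (q : G.Walk u' w'), q.IsTrail → q.length ≤ p.length) {x : V}
    (h : G.Adj u x) : s(u, x) ∈ p.edges := by
  by_contra hx
  have hlonger : (cons h.symm p).IsTrail := (isTrail_cons _ _).mpr ⟨hp, by rwa [Sym2.eq_swap]⟩
  simpa using hmax _ _ _ hlonger

lemma IsTrail.neighborSet_deleteEdges_edges_eq_empty_of_forall_length_le {p : G.Walk u w}
    (hp : p.IsTrail)
    (hmax : ∀ (u' w' : V) (q : G.Walk u' w'), q.IsTrail → q.length ≤ p.length) :
    (G.deleteEdges ↑p.edges.toFinset).neighborSet u = ∅ ∧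
      (G.deleteEdges ↑p.edges.toFinset).neighborSet w = ∅ := by
  refine ⟨neighborSet_deleteEdges_eq_empty fun x hx => ?_,
    neighborSet_deleteEdges_eq_empty fun x hx => ?_⟩
  · simpa using hp.mem_edges_of_forall_length_le hmax hx
  · simpa using hp.reverse.mem_edges_of_forall_length_le (by simpa using hmax) hx

end Walk

variable [Finite V]

lemma ncard_neighborSet_sup_of_disjoint {A B : SimpleGraph V}
    (h : Disjoint A.edgeSet B.edgeSet) (v : V) :
    ((A ⊔ B).neighborSet v).ncard = (A.neighborSet v).ncard + (B.neighborSet v).ncard := by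
  rw [neighborSet_sup]
  refine Set.ncard_union_eq (Set.disjoint_left.mpr fun w hA hB => ?_)
  exact Set.disjoint_left.mp h (A.mem_edgeSet.mpr hA) (B.mem_edgeSet.mpr hB)

namespace IsEdgeSplit

variable {G A B G₁ A₁ B₁ G₂ A₂ B₂ : SimpleGraph V}

lemma ncard_neighborSet (h : IsEdgeSplit G A B) (v : V) :
    (G.neighborSet v).ncard = (A.neighborSet v).ncard + (B.neighborSet v).ncard := by
  rw [← h.sup_eq, ncard_neighborSet_sup_of_disjoint h.disjoint]

lemma imbalance_sup (h₁ : IsEdgeSplit G₁ A₁ B₁) (h₂ : IsEdgeSplit G₂ A₂ B₂)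
    (h : Disjoint G₁.edgeSet G₂.edgeSet) (v : V) :
    imbalance (A₁ ⊔ A₂) (B₁ ⊔ B₂) v = imbalance A₁ B₁ v + imbalance A₂ B₂ v := by
  rw [imbalance, imbalance, imbalance,
    ncard_neighborSet_sup_of_disjoint <|
      h.mono (edgeSet_mono h₁.left_le) (edgeSet_mono h₂.left_le),
    ncard_neighborSet_sup_of_disjoint <|
      h.mono (edgeSet_mono h₁.right_le) (edgeSet_mono h₂.right_le)]
  push_cast
  ring

lemma imbalance_eq_zero (h : IsEdgeSplit G A B) {v : V} (hv : G.neighborSet v = ∅) :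
    imbalance A B v = 0 := by
  have := h.ncard_neighborSet v
  rw [hv, Set.ncard_empty] at this
  simp only [imbalance]
  omega

end IsEdgeSplit

theorem exists_isEdgeSplit_abs_imbalance_le_two (G : SimpleGraph V) :
    ∃ A B : SimpleGraph V, IsEdgeSplit G A B ∧ ∀ v, |imbalance A B v| ≤ 2 := by
  classical
  induction hn : G.edgeSet.ncard using Nat.strong_induction_on generalizing G with
  | _ n ih =>
  rcases G.edgeSet.eq_empty_or_nonempty with hG | ⟨e, he⟩
  · rw [edgeSet_eq_empty] at hG
    subst hG
    exact ⟨⊥, ⊥, ⟨bot_sup_eq _, by simp⟩, fun v => by simp [imbalance]⟩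
  obtain ⟨⟨x, y⟩, rfl⟩ := e.exists_rep
  have hxy : G.Adj x y := he
  have : Nonempty V := ⟨x⟩
  obtain ⟨u, w, p, hp, hmax⟩ := Walk.exists_isTrail_forall_isTrail_length_le_length G
  set E : Set (Sym2 V) := ↑p.edges.toFinset
  have hEG : E ⊆ G.edgeSet := fun e he => p.edges_subset_edgeSet (by simpa [E] using he)
  have hE : E.Nonempty := by
    have hlen : 1 ≤ p.length := hmax _ _ (.cons hxy .nil) (by simp)
    obtain ⟨e, he⟩ := List.exists_mem_of_length_pos (p.length_edges ▸ hlen)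
    exact ⟨e, by simpa [E] using he⟩
  have hfewer : (G.deleteEdges E).edgeSet.ncard < n := by
    rw [← hn, edgeSet_deleteEdges]
    exact Set.ncard_lt_ncard (LE.le.sdiff_ssubset_of_nonempty hEG hE)
  obtain ⟨A, B, hAB, hbal⟩ := ih _ hfewer _ rfl
  have hdisj : Disjoint (G.deleteEdges E).edgeSet (fromEdgeSet E).edgeSet := by
    rw [edgeSet_deleteEdges, edgeSet_fromEdgeSet]
    exact Set.disjoint_sdiff_left.mono_right Set.sdiff_subset
  have hsplit := hAB.sup hp.isEdgeSplit_alternateEdges hdisj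
  rw [deleteEdges, sdiff_sup_cancel ((fromEdgeSet_le G).mpr (Set.sdiff_subset.trans hEG))]
    at hsplit
  refine ⟨_, _, hsplit, fun v => ?_⟩
  rw [hAB.imbalance_sup hp.isEdgeSplit_alternateEdges hdisj, hp.imbalance_alternateEdges]
  -- The ends of a longest trail have no edges off it, so only the trail unbalances them.
  obtain ⟨hu, hw⟩ := hp.neighborSet_deleteEdges_edges_eq_empty_of_forall_length_le hmax
  replace hu := hAB.imbalance_eq_zero hu
  replace hw := hAB.imbalance_eq_zero hw
  have := hbal v
  rcases neg_one_pow_eq_or ℤ p.length with h | h <;>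
  by_cases v = u <;> by_cases v = w <;> simp_all

theorem exists_edgeDisjoint_halves (G : SimpleGraph V) :
    ∃ K : Fin 2 → SimpleGraph V, (∀ j, K j ≤ G) ∧
      (Pairwise fun j j' => Disjoint (K j).edgeSet (K j').edgeSet) ∧
      ∀ j v, (G.neighborSet v).ncard + 2 ≤ 2 * (((K j).neighborSet v).ncard + 2) := by
  obtain ⟨A, B, hAB, hbal⟩ := G.exists_isEdgeSplit_abs_imbalance_le_two
  refine ⟨![A, B], ?_, ?_, fun j v => ?_⟩
  · intro j
    fin_cases j
    exacts [hAB.left_le, hAB.right_le]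
  · intro j j' hj
    fin_cases j <;> fin_cases j'
    exacts [absurd rfl hj, hAB.disjoint, hAB.disjoint.symm, absurd rfl hj]
  · have hsum := hAB.ncard_neighborSet v
    have := abs_le.mp (hbal v)
    simp only [imbalance] at this
    fin_cases j <;> simp <;> omega

theorem exists_edgeDisjoint_pow_two_parts (G : SimpleGraph V) (ℓ : ℕ) :
    ∃ H : Fin (2 ^ ℓ) → SimpleGraph V, (∀ i, H i ≤ G) ∧
      (Pairwise fun i j => Disjoint (H i).edgeSet (H j).edgeSet) ∧
      ∀ i v, (G.neighborSet v).ncard + 2 ≤ 2 ^ ℓ * (((H i).neighborSet v).ncard + 2) := by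
  induction ℓ with
  | zero =>
    refine ⟨fun _ => G, fun _ => le_rfl, fun i j hij => ?_, fun _ _ => by simp⟩
    exact (hij (Subsingleton.elim (α := Fin 1) i j)).elim
  | succ ℓ ih =>
    obtain ⟨H, hHG, hH, hdeg⟩ := ih
    choose K hKH hK hKdeg using fun i => exists_edgeDisjoint_halves (H i)
    let e : Fin (2 ^ (ℓ + 1)) ≃ Fin (2 ^ ℓ) × Fin 2 :=
      (finCongr (pow_succ 2 ℓ)).trans finProdFinEquiv.symm
    refine ⟨fun k => K (e k).1 (e k).2, fun k => (hKH _ _).trans (hHG _),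
      (pairwise_disjoint_edgeSet_uncurry hH hKH hK).comp_of_injective e.injective, fun k v => ?_⟩
    calc (G.neighborSet v).ncard + 2
        ≤ 2 ^ ℓ * (((H (e k).1).neighborSet v).ncard + 2) := hdeg _ v
      _ ≤ 2 ^ ℓ * (2 * (((K (e k).1 (e k).2).neighborSet v).ncard + 2)) :=
          Nat.mul_le_mul_left _ (hKdeg _ _ v)
      _ = 2 ^ (ℓ + 1) * (((K (e k).1 (e k).2).neighborSet v).ncard + 2) := by ring

end SimpleGraph

open SimpleGraph

theorem stmt2_general {V : Type*} [Fintype V] (G : SimpleGraph V) (δ : ℕ)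
    (hδ : ∀ v : V, δ ≤ (G.neighborSet v).ncard) (ℓ : ℕ) :
    ∃ H : Fin (2 ^ ℓ) → SimpleGraph V,
      (∀ i, H i ≤ G) ∧
      (∀ i j, i ≠ j → Disjoint (H i).edgeSet (H j).edgeSet) ∧
      (∀ i, ∀ v : V,
        ((δ : ℝ) - 2 ^ (ℓ + 1) + 2) / 2 ^ ℓ ≤ (((H i).neighborSet v).ncard : ℝ)) := by
  obtain ⟨H, hHG, hH, hdeg⟩ := G.exists_edgeDisjoint_pow_two_parts ℓ
  refine ⟨H, hHG, fun i j hij => hH hij, fun i v => ?_⟩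
  have : (δ : ℝ) + 2 ≤ 2 ^ ℓ * (((H i).neighborSet v).ncard + 2) := by
    exact_mod_cast (Nat.add_le_add_right (hδ v) 2).trans (hdeg i v)
  rw [div_le_iff₀ (by positivity), pow_succ]
  linarith

theorem stmt2 {V : Type*} [Fintype V] (G : SimpleGraph V) (δ : ℕ)
    (hδ : ∀ v : V, δ ≤ (G.neighborSet v).ncard) (ℓ : ℕ) (hℓ : 1 ≤ ℓ) :
    ∃ H : Fin (2 ^ ℓ) → SimpleGraph V,
      (∀ i, H i ≤ G) ∧
      (∀ i j, i ≠ j → Disjoint (H i).edgeSet (H j).edgeSet) ∧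
      (∀ i, ∀ v : V,
        ((δ : ℝ) - 2 ^ (ℓ + 1) + 2) / 2 ^ ℓ ≤ (((H i).neighborSet v).ncard : ℝ)) :=
  stmt2_general G δ hδ ℓ
end

section
/- Every graph G on n vertices with minimum degree δ ≥ 1 and p connected components has a 2-step dominating set of size at most n/(δ+1) that contains at least one vertex from each connected component. -/
open SimpleGraph

/-- `D` is a 2-step dominating set of `G`: every vertex is within distance 2 of `D`. -/
def TwoStepDominating {V : Type*} (G : SimpleGraph V) (D : Set V) : Prop :=
  ∀ v : V, ∃ u ∈ D, ∃ p : G.Walk u v, p.length ≤ 2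

theorem stmt4 {V : Type*} [Fintype V] (G : SimpleGraph V)
    (n δ : ℕ) (hn : Fintype.card V = n)
    (hδ1 : 1 ≤ δ) (hδ : ∀ v : V, δ ≤ (G.neighborSet v).ncard) :
    ∃ D : Finset V, TwoStepDominating G ↑D ∧
      ((D.card : ℝ) ≤ (n : ℝ) / (δ + 1)) ∧
      (∀ C : G.ConnectedComponent, ∃ v ∈ D, G.connectedComponentMk v = C) := by
  classical
  -- packing predicate: pairwise distance ≥ 3
  set P : Finset V → Prop := fun D => ∀ u ∈ D, ∀ w ∈ D, u ≠ w →
    ¬ ∃ p : G.Walk u w, p.length ≤ 2 with hPdef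
  have hP0 : P ∅ := by intro u hu; simp at hu
  -- choose a packing of maximal cardinality
  have hne : (Finset.univ.filter fun D : Finset V => P D).Nonempty := by
    exact ⟨∅, Finset.mem_filter.mpr ⟨Finset.mem_univ _, hP0⟩⟩
  obtain ⟨D, hDmem, hmax⟩ :=
    (Finset.univ.filter fun D : Finset V => P D).exists_max_image Finset.card hne
  have hDP : P D := (Finset.mem_filter.mp hDmem).2
  -- D is 2-step dominating
  have hdom : ∀ v : V, ∃ u ∈ D, ∃ p : G.Walk u v, p.length ≤ 2 := by
    intro v
    by_contra h
    push_neg at h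
    have hvD : v ∉ D := by
      intro hv
      have := h v hv Walk.nil
      simp at this
    have hins : P (insert v D) := by
      intro u hu w hw huw hex
      obtain ⟨p, hp⟩ := hex
      rcases Finset.mem_insert.mp hu with rfl | hu'
      · rcases Finset.mem_insert.mp hw with rfl | hw'
        · exact huw rfl
        · exact absurd (by simpa using hp : p.reverse.length ≤ 2) (not_le.mpr (h w hw' p.reverse))
      · rcases Finset.mem_insert.mp hw with rfl | hw'
        · exact absurd hp (not_le.mpr (h u hu' p))
        · exact hDP u hu' w hw' huw ⟨p, hp⟩
    have : (insert v D).card ≤ D.card := by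
      exact hmax _ (Finset.mem_filter.mpr ⟨Finset.mem_univ _, hins⟩)
    rw [Finset.card_insert_of_notMem hvD] at this
    omega
  refine ⟨D, hdom, ?_, ?_⟩
  · -- cardinality bound via disjoint closed neighborhoods
    set N : V → Finset V := fun v => insert v (G.neighborFinset v) with hNdef
    have hNcard : ∀ v, δ + 1 ≤ (N v).card := by
      intro v
      have hv : v ∉ G.neighborFinset v := by simp
      rw [hNdef, Finset.card_insert_of_notMem hv]
      have : (G.neighborSet v).ncard = (G.neighborFinset v).card := by
        rw [neighborFinset_def, Set.ncard_eq_toFinset_card']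
      have := hδ v
      omega
    have hdisj : (D : Set V).PairwiseDisjoint N := by
      intro u hu w hw huw
      simp only [Finset.mem_coe] at hu hw
      rw [Function.onFun, Finset.disjoint_left]
      intro x hxu hxw
      apply hDP u hu w hw huw
      have hu' : x = u ∨ G.Adj u x := by
        rcases Finset.mem_insert.mp hxu with h | h
        · exact Or.inl h
        · exact Or.inr (by simpa using h)
      have hw' : x = w ∨ G.Adj w x := by
        rcases Finset.mem_insert.mp hxw with h | h
        · exact Or.inl h
        · exact Or.inr (by simpa using h)
      rcases hu' with rfl | hau
      · rcases hw' with rfl | haw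
        · exact absurd rfl huw
        · exact ⟨Walk.cons haw.symm Walk.nil, by simp⟩
      · rcases hw' with rfl | haw
        · exact ⟨Walk.cons hau Walk.nil, by simp⟩
        · exact ⟨Walk.cons hau (Walk.cons haw.symm Walk.nil), by simp⟩
    have hsum : D.card * (δ + 1) ≤ n := by
      calc D.card * (δ + 1) = ∑ _v ∈ D, (δ + 1) := by
            rw [Finset.sum_const, smul_eq_mul]
        _ ≤ ∑ v ∈ D, (N v).card := Finset.sum_le_sum fun v _ => hNcard v
        _ = (D.biUnion N).card := (Finset.card_biUnion (fun u hu w hw h =>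
              hdisj (by simpa using hu) (by simpa using hw) h)).symm
        _ ≤ Fintype.card V := by
              simpa using Finset.card_le_card (Finset.subset_univ (D.biUnion N))
        _ = n := hn
    have hpos : (0 : ℝ) < (δ : ℝ) + 1 := by positivity
    rw [le_div_iff₀ hpos]
    have : ((D.card * (δ + 1) : ℕ) : ℝ) ≤ (n : ℝ) := by exact_mod_cast hsum
    push_cast at this
    linarith
  · -- each component contains a vertex of D
    intro C
    obtain ⟨v, rfl⟩ := C.exists_rep
    obtain ⟨u, huD, p, _⟩ := hdom v
    exact ⟨u, huD, ConnectedComponent.sound p.reachable⟩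
end

section
/- If G is a connected graph on n vertices with minimum degree δ, then G has a connected 2-step dominating set of size at most 5n/(δ+1) - 4. -/
/-!
Grow a set `S` of vertices at pairwise distance at least `3` together with a connected subgraph
`H ⊇ S` satisfying `|H| + 4 ≤ 5|S|`. If some vertex is at distance at least `3` from `S`, walking
towards `S` produces such a vertex `w` at distance exactly `3` from some `t ∈ S`; adding `w` to `S`
and a shortest `t`-`w` path to `H` keeps both properties. A maximal such `S` therefore dominates
every vertex within distance `2`, so `H` is a connected 2-step dominating set. The closed
neighbourhoods of the points of `S` are disjoint and have at least `δ + 1` vertices each, whence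
`|S| (δ + 1) ≤ n` and `|H| ≤ 5n/(δ + 1) - 4`.
-/

open SimpleGraph

namespace SimpleGraph

variable {V : Type*} {G : SimpleGraph V}

lemma Walk.ncard_verts_toSubgraph_le {u v : V} (p : G.Walk u v) :
    p.toSubgraph.verts.ncard ≤ p.length + 1 := by
  classical
  rw [Walk.verts_toSubgraph, ← p.length_support]
  calc {w | w ∈ p.support}.ncard = p.support.toFinset.card := by
        rw [← Set.ncard_coe_finset, List.coe_toFinset]
    _ ≤ p.support.length := List.toFinset_card_le _

lemma dist_le_two_of_mem_insert_neighborFinset [DecidableEq V] [LocallyFinite G] {a b x : V}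
    (ha : x ∈ insert a (G.neighborFinset a))
    (hb : x ∈ insert b (G.neighborFinset b)) : G.dist a b ≤ 2 := by
  have walk_of_mem {c : V} (hc : x ∈ insert c (G.neighborFinset c)) :
      ∃ p : G.Walk c x, p.length ≤ 1 := by
    rcases Finset.mem_insert.mp hc with rfl | hc
    · exact ⟨Walk.nil, by simp⟩
    · exact ⟨((G.mem_neighborFinset _ _).mp hc).toWalk, by simp⟩
  obtain ⟨p, hp⟩ := walk_of_mem ha
  obtain ⟨q, hq⟩ := walk_of_mem hb
  calc G.dist a b ≤ (p.append q.reverse).length := dist_le _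
    _ ≤ 2 := by simp only [Walk.length_append, Walk.length_reverse]; omega

lemma card_mul_succ_le_card_of_pairwise_three_le_dist [Fintype V] {δ : ℕ}
    (hδ : ∀ v : V, δ ≤ (G.neighborSet v).ncard) {S : Finset V}
    (hS : (S : Set V).Pairwise fun a b => 3 ≤ G.dist a b) :
    S.card * (δ + 1) ≤ Fintype.card V := by
  classical
  let N : V → Finset V := fun s => insert s (G.neighborFinset s)
  have hN : ∀ s, δ + 1 ≤ (N s).card := fun s => by
    rw [Finset.card_insert_of_notMem (G.notMem_neighborFinset_self s), neighborFinset_def,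
      ← Set.ncard_eq_toFinset_card']
    exact Nat.succ_le_succ (hδ s)
  have hdisj : (S : Set V).PairwiseDisjoint N := fun a ha b hb hab =>
    Finset.disjoint_left.mpr fun x hxa hxb =>
      absurd (dist_le_two_of_mem_insert_neighborFinset hxa hxb) (by have := hS ha hb hab; omega)
  calc S.card * (δ + 1) = ∑ _s ∈ S, (δ + 1) := by rw [Finset.sum_const, smul_eq_mul]
    _ ≤ ∑ s ∈ S, (N s).card := Finset.sum_le_sum fun s _ => hN s
    _ = (S.biUnion N).card := (Finset.card_biUnion hdisj).symm
    _ ≤ Fintype.card V := Finset.card_le_univ _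

lemma Preconnected.exists_dist_eq_three (hG : G.Preconnected) {S : Set V} {s v : V} (hs : s ∈ S)
    (hv : ∀ t ∈ S, 3 ≤ G.dist t v) :
    ∃ w, (∀ t ∈ S, 3 ≤ G.dist t w) ∧ ∃ t ∈ S, G.dist t w = 3 := by
  obtain ⟨p⟩ := hG v s
  induction p with
  | nil => exact absurd (hv _ hs) (by simp)
  | @cons v u _ hvu _ ih =>
    by_cases hu : ∀ t ∈ S, 3 ≤ G.dist t u
    · exact ih hs hu
    simp only [not_forall, not_le] at hu
    obtain ⟨t, ht, htu⟩ := hu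
    have := hvu.symm.reachable.dist_triangle_right t
    rw [dist_eq_one_iff_adj.mpr hvu.symm] at this
    exact ⟨v, hv, t, ht, by have := hv t ht; omega⟩

structure IsTwoPackingWithHull (G : SimpleGraph V) (S : Finset V) : Prop where
  pairwise_three_le_dist : (S : Set V).Pairwise fun a b => 3 ≤ G.dist a b
  exists_hull : ∃ H : G.Subgraph, H.Connected ∧ ↑S ⊆ H.verts ∧ H.verts.ncard + 4 ≤ 5 * S.card

lemma isTwoPackingWithHull_singleton (v : V) : IsTwoPackingWithHull G {v} where
  pairwise_three_le_dist := by simp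
  exists_hull := ⟨G.singletonSubgraph v, Subgraph.singletonSubgraph_connected, by simp, by simp⟩

lemma IsTwoPackingWithHull.insert [DecidableEq V] {S : Finset V} (hS : IsTwoPackingWithHull G S)
    {t v : V} (hv : ∀ s ∈ S, 3 ≤ G.dist s v) (ht : t ∈ S) (htv : G.dist t v = 3) :
    IsTwoPackingWithHull G (insert v S) := by
  have hvS : v ∉ S := fun h => by simpa using hv v h
  obtain ⟨H, hH, hSH, hHcard⟩ := hS.exists_hull
  obtain ⟨p, hp⟩ := exists_walk_of_dist_ne_zero (G := G) (u := t) (v := v) (by omega)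
  refine ⟨?_, H ⊔ p.toSubgraph, ?_, ?_, ?_⟩
  · rw [Finset.coe_insert, Set.pairwise_insert]
    exact ⟨hS.pairwise_three_le_dist, fun s hs _ => ⟨dist_comm (G := G) ▸ hv s hs, hv s hs⟩⟩
  · exact Subgraph.connected_sup hH.preconnected p.toSubgraph_connected.preconnected
      ⟨t, hSH ht, p.start_mem_verts_toSubgraph⟩
  · rw [Finset.coe_insert, Subgraph.verts_sup]
    exact Set.insert_subset (Or.inr p.end_mem_verts_toSubgraph) (hSH.trans Set.subset_union_left)
  · have hp4 : p.toSubgraph.verts.ncard ≤ 4 := by have := p.ncard_verts_toSubgraph_le; omega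
    have := Set.ncard_union_le H.verts p.toSubgraph.verts
    rw [Subgraph.verts_sup, Finset.card_insert_of_notMem hvS]
    omega

lemma IsTwoPackingWithHull.exists_dist_le_two_of_card_maximal (hG : G.Preconnected)
    {S : Finset V} (hS : IsTwoPackingWithHull G S)
    (hmax : ∀ T, IsTwoPackingWithHull G T → T.card ≤ S.card) (v : V) :
    ∃ t ∈ S, G.dist t v ≤ 2 := by
  classical
  by_contra! hv
  obtain ⟨H, -, -, hHcard⟩ := hS.exists_hull
  obtain ⟨s, hs⟩ : S.Nonempty := Finset.card_pos.mp (by omega)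
  obtain ⟨w, hw, t, ht, htw⟩ := hG.exists_dist_eq_three (S := ↑S) hs hv
  have hwS : w ∉ S := fun h => by simpa using hw w h
  have := hmax _ (hS.insert hw ht htw)
  rw [Finset.card_insert_of_notMem hwS] at this
  omega

end SimpleGraph

theorem stmt5 {V : Type*} [Fintype V] (G : SimpleGraph V) (hG : G.Connected)
    (n δ : ℕ) (hn : Fintype.card V = n)
    (hδ : ∀ v : V, δ ≤ (G.neighborSet v).ncard) :
    ∃ D : Finset V, TwoStepDominating G ↑D ∧
      (G.induce (↑D : Set V)).Connected ∧
      ((D.card : ℝ) ≤ 5 * (n : ℝ) / (δ + 1) - 4) := by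
  classical
  obtain ⟨v₀⟩ := hG.nonempty
  obtain ⟨S, hS, hmax⟩ := Set.exists_max_image {S : Finset V | IsTwoPackingWithHull G S}
    Finset.card (Set.toFinite _) ⟨{v₀}, isTwoPackingWithHull_singleton v₀⟩
  obtain ⟨H, hH, hSH, hHcard⟩ := hS.exists_hull
  have hdom := hS.exists_dist_le_two_of_card_maximal hG.preconnected hmax
  have hcount := card_mul_succ_le_card_of_pairwise_three_le_dist hδ hS.pairwise_three_le_dist
  refine ⟨H.verts.toFinset, fun v => ?_, by rw [Set.coe_toFinset]; exact hH.induce_verts, ?_⟩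
  · obtain ⟨t, ht, htv⟩ := hdom v
    obtain ⟨p, hp⟩ := (hG t v).exists_walk_length_eq_dist
    exact ⟨t, by simpa using hSH ht, p, by omega⟩
  · rw [← Set.ncard_eq_toFinset_card', le_sub_iff_add_le, le_div_iff₀ (by positivity)]
    have hH' : (H.verts.ncard : ℝ) + 4 ≤ 5 * S.card := by exact_mod_cast hHcard
    have hS' : (S.card : ℝ) * (δ + 1) ≤ n := by rw [← hn]; exact_mod_cast hcount
    nlinarith [(by positivity : (0 : ℝ) ≤ δ)]
end

section
/- Let G be a connected graph and D a 2-step dominating set of G whose induced subgraph has connected components Q_1, …, Q_r with r ≥ 2. Then there exist two distinct components Q_i, Q_j with d(Q_i, Q_j) ≤ 5, where d(X,Y) = min{d(x,y) : x ∈ X, y ∈ Y}. -/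
open SimpleGraph

/-- Walking from `x` towards `y`, the vertex at step `k + 1` is within distance `k` of some
`u ∈ D`. If `u` lies outside the component of `x`, then `x` and `u` are at distance `≤ 2k + 1`;
otherwise `u` lies outside the component of `y` and is strictly closer to `y` than `x` was. -/
theorem exists_walk_length_le_of_not_reachable_induce {V : Type*} {G : SimpleGraph V}
    {D : Set V} {k : ℕ} (hD : ∀ v : V, ∃ u ∈ D, ∃ q : G.Walk u v, q.length ≤ k)
    (x y : D) (hxy : ¬ (G.induce D).Reachable x y) (p : G.Walk (x : V) (y : V)) :
    ∃ x' y' : D, ¬ (G.induce D).Reachable x' y' ∧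
      ∃ p' : G.Walk (x' : V) (y' : V), p'.length ≤ 2 * k + 1 := by
  induction hn : p.length using Nat.strong_induction_on generalizing x y with
  | _ n ih =>
    by_cases hshort : n ≤ 2 * k + 1
    · exact ⟨x, y, hxy, p, hn ▸ hshort⟩
    obtain ⟨u, hu, q, hq⟩ := hD (p.getVert (k + 1))
    by_cases hxu : (G.induce D).Reachable x ⟨u, hu⟩
    · have huy : ¬ (G.induce D).Reachable ⟨u, hu⟩ y := fun huy => hxy (hxu.trans huy)
      refine ih _ ?_ ⟨u, hu⟩ y huy (q.append (p.drop (k + 1))) rfl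
      rw [Walk.length_append, Walk.drop_length]
      omega
    · refine ⟨x, ⟨u, hu⟩, hxu, (p.take (k + 1)).append q.reverse, ?_⟩
      rw [Walk.length_append, Walk.length_reverse, Walk.take_length]
      omega

theorem stmt6_general {V : Type*} (G : SimpleGraph V) (hG : G.Connected)
    (D : Set V) (hD : TwoStepDominating G D)
    (hr : ∃ a b : D, ¬ (G.induce D).Reachable a b) :
    ∃ x y : D, ¬ (G.induce D).Reachable x y ∧
      ∃ p : G.Walk (x : V) (y : V), p.length ≤ 5 := by
  obtain ⟨a, b, hab⟩ := hr
  exact exists_walk_length_le_of_not_reachable_induce hD a b hab (hG.preconnected a b).some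

/-- The induced subgraph `G[D]` has at least two connected components, i.e.
some two vertices of `D` are not joined inside `G[D]`. So there are two distinct
components `Q_i, Q_j` of `G[D]` at distance at most 5 in `G`: witnessed by vertices
`x, y ∈ D` lying in different components of `G[D]` joined by a walk of length ≤ 5 in `G`. -/
theorem stmt6 {V : Type*} [Fintype V] (G : SimpleGraph V) (hG : G.Connected)
    (D : Set V) (hD : TwoStepDominating G D)
    (hr : ∃ a b : D, ¬ (G.induce D).Reachable a b) :
    ∃ x y : D, ¬ (G.induce D).Reachable x y ∧
      ∃ p : G.Walk (x : V) (y : V), p.length ≤ 5 :=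
  stmt6_general G hG D hD hr
end

section
/- If D is a connected k-dominating set of a connected graph G, then rx_k(G) ≤ rx_k(G[D]) + k. -/
/-!
Let `M = rx_k(G[D])` and colour `G[D]` rainbow with colours `< M`. Each vertex `v ∉ D` fixes
`k` distinct neighbours `F v 0, …, F v (k-1)` in `D` (its ports), and the edge from `v` to
`F v i` gets the new colour `M + i`. Given `k` vertices `S`, the vertices of `S \ D` choose
pairwise distinct indices, so their pendant edges carry distinct new colours. Together with
`S ∩ D`, their chosen neighbours form at most `k` vertices of `D`, joined by a rainbow connected
subgraph of `G[D]`; adding the pendant edges keeps it rainbow.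
-/

open SimpleGraph

/-- An edge-coloring `c` is a `k`-rainbow coloring of `G` if every set of `k` vertices
is connected by a rainbow tree (here: a connected subgraph whose edges receive
pairwise distinct colors). -/
def IsKRainbowColoring {V : Type*} (G : SimpleGraph V) (k : ℕ) (c : Sym2 V → ℕ) : Prop :=
  ∀ S : Finset V, S.card = k →
    ∃ T : G.Subgraph, T.Connected ∧ ↑S ⊆ T.verts ∧ Set.InjOn c T.edgeSet

/-- The `k`-rainbow index: minimum number of colors in a `k`-rainbow coloring. -/
noncomputable def rxk {V : Type*} (G : SimpleGraph V) (k : ℕ) : ℕ :=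
  sInf {m | ∃ c : Sym2 V → ℕ, (∀ e ∈ G.edgeSet, c e < m) ∧ IsKRainbowColoring G k c}

open Function

section

variable {V W : Type*}

namespace SimpleGraph.Subgraph

variable {G : SimpleGraph V}

lemma Connected.map_hom {G' : SimpleGraph W} (f : G →g G') {H : G.Subgraph} (hH : H.Connected) :
    (H.map f).Connected := by
  let g : H.coe →g (H.map f).coe :=
    ⟨fun x ↦ ⟨f x, x, x.2, rfl⟩, fun {a b} hab ↦ ⟨a, b, hab, rfl, rfl⟩⟩
  rw [Subgraph.connected_iff'] at hH ⊢
  refine hH.map g ?_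
  rintro ⟨_, x, hx, rfl⟩
  exact ⟨⟨x, hx⟩, rfl⟩

lemma Connected.sup_finsetSup {ι : Type*} [DecidableEq ι] {H : G.Subgraph} (hH : H.Connected)
    (s : Finset ι) {K : ι → G.Subgraph} (hK : ∀ i ∈ s, (K i).Connected)
    (hmeet : ∀ i ∈ s, ((K i).verts ∩ H.verts).Nonempty) : (H ⊔ s.sup K).Connected := by
  induction s using Finset.induction_on with
  | empty => simpa using hH
  | insert i s _ ih =>
    rw [Finset.sup_insert, sup_left_comm]
    obtain ⟨x, hxK, hxH⟩ := hmeet i (Finset.mem_insert_self i s)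
    refine connected_sup (hK i (Finset.mem_insert_self i s)).preconnected ?_ ⟨x, hxK, Or.inl hxH⟩
    exact (ih (fun j hj ↦ hK j (Finset.mem_insert_of_mem hj))
      (fun j hj ↦ hmeet j (Finset.mem_insert_of_mem hj))).preconnected

end SimpleGraph.Subgraph

lemma exists_injective_fin_of_le_ncard {s : Set V} (hs : s.Finite) {k : ℕ} (hk : k ≤ s.ncard) :
    ∃ f : Fin k → V, Injective f ∧ ∀ i, f i ∈ s := by
  have := hs.fintype
  obtain ⟨f⟩ : Nonempty (Fin k ↪ s) := Embedding.nonempty_of_card_le <| by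
    rwa [Fintype.card_fin, ← Nat.card_eq_fintype_card, Nat.card_coe_set_eq]
  exact ⟨fun i ↦ f i, Subtype.val_injective.comp f.injective, fun i ↦ (f i).2⟩

lemma Sym2.exists_extend_of_subtype {α : Type*} (D : Set V) (f : Sym2 D → α) (g : V → V → α)
    (z : α) : ∃ c : Sym2 V → α, (∀ e, c (e.map (↑)) = f e) ∧
      (∀ v ∉ D, ∀ w ∈ D, c s(v, w) = g v w) ∧ ∀ v w, v ∉ D → w ∉ D → c s(v, w) = z := by
  classical
  let c₀ (a b : V) : α :=
    if h : a ∈ D ∧ b ∈ D then f s(⟨a, h.1⟩, ⟨b, h.2⟩)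
    else if a ∈ D then g b a else if b ∈ D then g a b else z
  have hc₀ : ∀ a b, c₀ a b = c₀ b a := by
    intro a b
    by_cases ha : a ∈ D <;> by_cases hb : b ∈ D <;> simp [c₀, ha, hb, Sym2.eq_swap]
  refine ⟨Sym2.lift ⟨c₀, hc₀⟩, fun e ↦ ?_, fun v hv w hw ↦ ?_, fun v w hv hw ↦ ?_⟩
  · induction e using Sym2.ind with
    | _ a b => simp [c₀]
  · simp [c₀, hv, hw]
  · simp [c₀, hv, hw]

section Rainbow

variable {G : SimpleGraph V} {k : ℕ} {c : Sym2 V → ℕ}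

lemma exists_isKRainbowColoring_lt_rxk [Finite W] {H : SimpleGraph W} (hH : H.Connected) (k : ℕ) :
    ∃ c : Sym2 W → ℕ, (∀ e ∈ H.edgeSet, c e < rxk H k) ∧ IsKRainbowColoring H k c := by
  refine Nat.sInf_mem (s := {m | ∃ c : Sym2 W → ℕ, (∀ e ∈ H.edgeSet, c e < m) ∧
    IsKRainbowColoring H k c}) ?_
  obtain ⟨n, ⟨e⟩⟩ := Finite.exists_equiv_fin (Sym2 W)
  refine ⟨n, fun x ↦ e x, fun x _ ↦ (e x).isLt, fun S _ ↦ ⟨⊤, ?_, by simp, ?_⟩⟩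
  · exact Subgraph.connected_iff'.mpr
      (hH.map Subgraph.topIso.symm.toHom Subgraph.topIso.symm.surjective)
  · exact (Fin.val_injective.comp e.injective).injOn

lemma IsKRainbowColoring.exists_of_card_le [Fintype W] {H : SimpleGraph W} {c : Sym2 W → ℕ}
    (hc : IsKRainbowColoring H k c) (hk : k ≤ Fintype.card W) {S : Finset W} (hS : S.card ≤ k) :
    ∃ T : H.Subgraph, T.Connected ∧ ↑S ⊆ T.verts ∧ Set.InjOn c T.edgeSet := by
  obtain ⟨S', hSS', hS'⟩ := Finset.exists_superset_card_eq hS hk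
  obtain ⟨T, hT, hS'T, hinj⟩ := hc S' hS'
  exact ⟨T, hT, (Finset.coe_subset.mpr hSS').trans hS'T, hinj⟩

lemma IsKRainbowColoring.exists_subgraph_of_induce {D : Finset V}
    (hc : IsKRainbowColoring (G.induce (D : Set V)) k (fun e ↦ c (e.map (↑))))
    (hkD : k ≤ D.card) {B : Finset V} (hBD : B ⊆ D) (hB : B.card ≤ k) :
    ∃ T : G.Subgraph, T.Connected ∧ ↑B ⊆ T.verts ∧ Set.InjOn c T.edgeSet ∧
      T.edgeSet ⊆ Sym2.map (↑) '' (G.induce (D : Set V)).edgeSet := by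
  classical
  obtain ⟨T, hT, hBT, hinj⟩ := hc.exists_of_card_le (S := B.subtype (· ∈ D)) (by simpa using hkD)
    (by rwa [Finset.card_subtype, Finset.filter_true_of_mem hBD])
  refine ⟨T.map (Embedding.induce _).toHom, hT.map_hom _, fun v hv ↦ ?_, ?_, ?_⟩
  · exact ⟨⟨v, hBD hv⟩, hBT (by simpa using hv), rfl⟩
  · rw [Subgraph.edgeSet_map]
    exact hinj.image_of_comp
  · rw [Subgraph.edgeSet_map]
    exact Set.image_mono T.edgeSet_subset

lemma exists_rainbow_sup_pendants {ι : Type*} [Fintype ι] {T₀ : G.Subgraph} (hT₀ : T₀.Connected)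
    (hinj : Set.InjOn c T₀.edgeSet) (w u : ι → V) (hadj : ∀ i, G.Adj (w i) (u i))
    (hu : ∀ i, u i ∈ T₀.verts) (hfresh : ∀ e ∈ T₀.edgeSet, ∀ i, c e ≠ c s(w i, u i))
    (hpend : Injective fun i ↦ c s(w i, u i)) :
    ∃ T : G.Subgraph, T.Connected ∧ T₀.verts ⊆ T.verts ∧ Set.range w ⊆ T.verts ∧
      Set.InjOn c T.edgeSet := by
  classical
  refine ⟨T₀ ⊔ ⨆ i, G.subgraphOfAdj (hadj i), ?_, fun v hv ↦ Or.inl hv, ?_, ?_⟩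
  · rw [← Finset.sup_univ_eq_iSup]
    exact hT₀.sup_finsetSup _ (fun i _ ↦ Subgraph.subgraphOfAdj_connected _)
      (fun i _ ↦ ⟨u i, by simp, hu i⟩)
  · rintro _ ⟨i, rfl⟩
    exact Or.inr (Subgraph.verts_iSup ▸ Set.mem_iUnion.mpr ⟨i, by simp⟩)
  · simp only [Subgraph.edgeSet_sup, Subgraph.edgeSet_iSup, edgeSet_subgraphOfAdj,
      Set.iUnion_singleton_eq_range]
    rintro e (he | ⟨i, rfl⟩) e' (he' | ⟨j, rfl⟩) hce
    · exact hinj he he' hce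
    · exact absurd hce (hfresh e he j)
    · exact absurd hce.symm (hfresh e' he' i)
    · rw [hpend hce]

end Rainbow

section Dominating

variable {G : SimpleGraph V} {k M : ℕ} {D : Finset V}

lemma exists_coloring_of_ports (hk : 0 < k) (c' : Sym2 (D : Set V) → ℕ)
    (hc' : ∀ e ∈ (G.induce (D : Set V)).edgeSet, c' e < M) (F : V → Fin k → V)
    (hF_inj : ∀ v ∉ D, Injective (F v)) (hF_mem : ∀ v ∉ D, ∀ i, F v i ∈ D) :
    ∃ c : Sym2 V → ℕ, (∀ e, c (e.map (↑)) = c' e) ∧ (∀ v ∉ D, ∀ i, c s(v, F v i) = M + i) ∧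
      ∀ e ∈ G.edgeSet, c e < M + k := by
  obtain ⟨c, hc_in, hc_port, hc_out⟩ := Sym2.exists_extend_of_subtype (D : Set V) c'
    (fun v w ↦ M + (partialInv (F v) w).elim 0 Fin.val) 0
  have hport_lt : ∀ v w, M + (partialInv (F v) w).elim 0 Fin.val < M + k := by
    intro v w
    cases partialInv (F v) w <;> simp [hk]
  refine ⟨c, hc_in, fun v hv i ↦ ?_, fun e he ↦ ?_⟩
  · simp [hc_port v hv _ (hF_mem v hv i), partialInv_left (hF_inj v hv)]
  induction e using Sym2.ind with
  | _ a b =>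
    by_cases ha : a ∈ D <;> by_cases hb : b ∈ D
    · have := hc' s(⟨a, ha⟩, ⟨b, hb⟩) (by simpa using he)
      rw [show s(a, b) = (s(⟨a, ha⟩, ⟨b, hb⟩) : Sym2 (D : Set V)).map (↑) from rfl, hc_in]
      omega
    · rw [Sym2.eq_swap, hc_port b hb a ha]
      exact hport_lt b a
    · rw [hc_port a ha b hb]
      exact hport_lt a b
    · rw [hc_out a b ha hb]
      omega

lemma le_card_of_ports {S : Finset V} (hS : S.card = k) (F : V → Fin k → V)
    (hF_inj : ∀ v ∉ D, Injective (F v)) (hF_mem : ∀ v ∉ D, ∀ i, F v i ∈ D) : k ≤ D.card := by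
  by_cases hSD : S ⊆ D
  · exact hS ▸ Finset.card_le_card hSD
  obtain ⟨v, -, hv⟩ := Finset.not_subset.mp hSD
  simpa using Finset.card_le_card_of_injOn (s := .univ) (F v) (fun i _ ↦ hF_mem v hv i)
    (hF_inj v hv).injOn

theorem IsKRainbowColoring.of_induce_of_ports {c : Sym2 V → ℕ} (F : V → Fin k → V)
    (hF_inj : ∀ v ∉ D, Injective (F v)) (hF_mem : ∀ v ∉ D, ∀ i, F v i ∈ D)
    (hF_adj : ∀ v ∉ D, ∀ i, G.Adj v (F v i)) (hF_color : ∀ v ∉ D, ∀ i, c s(v, F v i) = M + i)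
    (hlt : ∀ e ∈ (G.induce (D : Set V)).edgeSet, c (e.map (↑)) < M)
    (hc : IsKRainbowColoring (G.induce (D : Set V)) k (fun e ↦ c (e.map (↑)))) :
    IsKRainbowColoring G k c := by
  classical
  intro S hS
  have hkD : k ≤ D.card := le_card_of_ports hS F hF_inj hF_mem
  set Sout := S.filter (· ∉ D)
  have hout : ∀ x : Sout, x.1 ∉ D := fun x ↦ (Finset.mem_filter.mp x.2).2
  obtain ⟨φ⟩ : Nonempty (Sout ↪ Fin k) :=
    Embedding.nonempty_of_card_le (by simpa [Sout, ← hS] using Finset.card_filter_le _ _)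
  let u (x : Sout) : V := F x (φ x)
  set B := S.filter (· ∈ D) ∪ Finset.univ.image u
  have hBD : B ⊆ D := by
    intro v hv
    rcases Finset.mem_union.mp hv with hv | hv
    · exact (Finset.mem_filter.mp hv).2
    · obtain ⟨x, -, rfl⟩ := Finset.mem_image.mp hv
      exact hF_mem x (hout x) _
  have hB : B.card ≤ k := calc
    B.card ≤ (S.filter (· ∈ D)).card + Sout.card :=
      (Finset.card_union_le _ _).trans
        (by grw [Finset.card_image_le, Finset.card_univ, Fintype.card_coe])
    _ = k := by rw [Finset.card_filter_add_card_filter_not, hS]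
  obtain ⟨T₀, hT₀, hBT₀, hinj₀, hedges₀⟩ := hc.exists_subgraph_of_induce hkD hBD hB
  have hfresh : ∀ e ∈ T₀.edgeSet, ∀ x, c e ≠ c s(x.1, u x) := by
    rintro _ he x
    obtain ⟨e, he', rfl⟩ := hedges₀ he
    have := hlt e he'
    rw [hF_color x (hout x)]
    omega
  obtain ⟨T, hT, hT₀T, hSoutT, hinj⟩ := exists_rainbow_sup_pendants hT₀ hinj₀ (↑) u
    (fun x ↦ hF_adj x (hout x) _) (fun x ↦ hBT₀ (by simp [B]))
    hfresh (fun x y hxy ↦ φ.injective <| Fin.ext <| by simpa [u, hF_color _ (hout _)] using hxy)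
  refine ⟨T, hT, fun v hv ↦ ?_, hinj⟩
  by_cases hvD : v ∈ D
  · exact hT₀T (hBT₀ (by simp [B, Finset.mem_coe.mp hv, hvD]))
  · exact hSoutT ⟨⟨v, Finset.mem_filter.mpr ⟨hv, hvD⟩⟩, rfl⟩

end Dominating

end

theorem stmt8_general {V : Type*} (G : SimpleGraph V)
    (k : ℕ) (hk : 2 ≤ k) (D : Finset V)
    (hdom : ∀ v : V, v ∉ D → k ≤ ((↑D : Set V) ∩ G.neighborSet v).ncard)
    (hconn : (G.induce (↑D : Set V)).Connected) :
    rxk G k ≤ rxk (G.induce (↑D : Set V)) k + k := by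
  obtain ⟨c', hc'_lt, hc'⟩ := exists_isKRainbowColoring_lt_rxk hconn k
  have hports : ∀ v, ∃ f : Fin k → V,
      v ∉ D → Injective f ∧ ∀ i, f i ∈ (D : Set V) ∩ G.neighborSet v := by
    intro v
    by_cases hv : v ∈ D
    · exact ⟨fun _ ↦ v, fun h ↦ absurd hv h⟩
    obtain ⟨f, hf, hfs⟩ :=
      exists_injective_fin_of_le_ncard (D.finite_toSet.inter_of_left _) (hdom v hv)
    exact ⟨f, fun _ ↦ ⟨hf, hfs⟩⟩
  choose F hF using hports
  obtain ⟨c, hc_in, hc_port, hc_lt⟩ := exists_coloring_of_ports (by omega) c' hc'_lt F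
    (fun v hv ↦ (hF v hv).1) (fun v hv i ↦ ((hF v hv).2 i).1)
  refine Nat.sInf_le ⟨c, hc_lt, IsKRainbowColoring.of_induce_of_ports F
    (fun v hv ↦ (hF v hv).1) (fun v hv i ↦ ((hF v hv).2 i).1) (fun v hv i ↦ ((hF v hv).2 i).2)
    hc_port (by simpa [hc_in] using hc'_lt) (funext hc_in ▸ hc')⟩

theorem stmt8 {V : Type*} [Fintype V] (G : SimpleGraph V) (hG : G.Connected)
    (k : ℕ) (hk : 2 ≤ k) (D : Finset V)
    (hdom : ∀ v : V, v ∉ D → k ≤ ((↑D : Set V) ∩ G.neighborSet v).ncard)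
    (hconn : (G.induce (↑D : Set V)).Connected) :
    rxk G k ≤ rxk (G.induce (↑D : Set V)) k + k :=
  stmt8_general G k hk D hdom hconn
end

section
/- If D is a connected k-dominating set of a connected graph G, then rx_k(G) ≤ |D| + k - 1; in particular rx_k(G) ≤ γ_k^c(G) + k - 1, where γ_k^c(G) is the connected k-domination number. -/
open SimpleGraph

/-- `D` is a connected `k`-dominating set of `G`. -/
def IsConnKDom {V : Type*} (G : SimpleGraph V) (k : ℕ) (D : Finset V) : Prop :=
  (G.induce (↑D : Set V)).Connected ∧
    ∀ v : V, v ∉ D → k ≤ ((↑D : Set V) ∩ G.neighborSet v).ncard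

/-- The connected `k`-domination number. -/
noncomputable def gammakc {V : Type*} (G : SimpleGraph V) (k : ℕ) : ℕ :=
  sInf {m | ∃ D : Finset V, D.card = m ∧ IsConnKDom G k D}

/-!
Take a spanning tree of `G[D]` and give its `|D| - 1` edges distinct colours. Every vertex
outside `D` has `k` neighbours in `D`; the edges to `k` of them receive the `k` further colours
`|D| - 1, …, |D| + k - 2`. Among `k` given vertices at most `k` lie outside `D`, so they can be
assigned pairwise different colours `j`, and hanging each of them on the tree by its edge of
colour `j` yields a rainbow connected subgraph containing all of them.
-/

namespace SimpleGraph

variable {V : Type*} {G : SimpleGraph V}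

lemma Subgraph.Connected.exists_spanning_card_edgeSet {H : G.Subgraph} (hH : H.Connected)
    [Finite H.verts] :
    ∃ T : G.Subgraph, T.Connected ∧ T.verts = H.verts ∧ T.edgeSet.Finite ∧
      T.edgeSet.ncard + 1 = H.verts.ncard := by
  obtain ⟨T, hle, hT⟩ := (Subgraph.connected_iff'.mp hH).exists_isTree_le
  refine ⟨Subgraph.coeSubgraph (toSubgraph T hle),
    (hT.connected.toSubgraph hle).coeSubgraph _, by simp, ?_, ?_⟩
  · rw [Subgraph.edgeSet_map]
    exact (Set.toFinite _).image _
  · have : Fintype T.edgeSet := Fintype.ofFinite _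
    have : Fintype H.verts := Fintype.ofFinite _
    have hE : (toSubgraph T hle).edgeSet = T.edgeSet := by
      ext e; induction e using Sym2.ind; simp
    rw [Subgraph.edgeSet_map, Set.ncard_image_of_injective _ (Sym2.map.injective H.hom_injective),
      hE]
    simpa [Nat.card_eq_fintype_card, edgeFinset] using hT.card_edgeFinset

lemma Subgraph.Connected.of_le_of_forall_adj {T W : G.Subgraph} (hT : T.Connected) (hle : T ≤ W)
    (h : ∀ v ∈ W.verts, v ∉ T.verts → ∃ u ∈ T.verts, W.Adj v u) : W.Connected := by
  obtain ⟨r, hr⟩ := hT.nonempty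
  have hreach (u : V) (hu : u ∈ T.verts) : W.coe.Reachable ⟨u, hle.1 hu⟩ ⟨r, hle.1 hr⟩ :=
    (hT.preconnected ⟨u, hu⟩ ⟨r, hr⟩).map (Subgraph.inclusion hle)
  rw [Subgraph.connected_iff', connected_iff_exists_forall_reachable]
  refine ⟨⟨r, hle.1 hr⟩, fun ⟨v, hv⟩ => ?_⟩
  by_cases hvT : v ∈ T.verts
  · exact (hreach v hvT).symm
  · obtain ⟨u, hu, hvu⟩ := h v hv hvT
    exact ((Subgraph.Adj.coe hvu).reachable.trans (hreach u hu)).symm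

end SimpleGraph

section

variable {V : Type*} {G : SimpleGraph V} {k : ℕ}

lemma isKRainbowColoring_of_rainbow_of_palette {m : ℕ} {c : Sym2 V → ℕ} {T : G.Subgraph}
    (hT : T.Connected) (hinj : Set.InjOn c T.edgeSet) (hlt : ∀ e ∈ T.edgeSet, c e < m)
    (hpal : ∀ v ∉ T.verts, ∀ j < k, ∃ d ∈ T.verts, G.Adj v d ∧ c s(v, d) = m + j) :
    IsKRainbowColoring G k c := by
  classical
  intro S hS
  set S' := S.filter (· ∉ T.verts)
  obtain ⟨τ⟩ : Nonempty (S' ↪ Fin k) :=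
    Function.Embedding.nonempty_of_card_le (by simpa [S', ← hS] using S.card_filter_le _)
  have hS'T (v : S') : (v : V) ∉ T.verts := (Finset.mem_filter.mp v.2).2
  choose d hdT hadj hcol using fun v : S' => hpal v (hS'T v) (τ v) (τ v).2
  let W := T ⊔ ⨆ v : S', G.subgraphOfAdj (hadj v)
  have hWedge : ∀ e ∈ W.edgeSet, e ∈ T.edgeSet ∨ ∃ v, e = s(↑v, d v) := by
    simp [W, Subgraph.edgeSet_sup, Subgraph.edgeSet_iSup, eq_comm]
  refine ⟨W, hT.of_le_of_forall_adj le_sup_left fun v hv hvT => ?_, fun v hv => ?_, ?_⟩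
  · have hWadj (w : S') : W.Adj w (d w) :=
      Or.inr (Subgraph.iSup_adj.mpr ⟨w, subgraphOfAdj_adj_self (hadj w)⟩)
    obtain ⟨w, rfl | rfl⟩ : ∃ w : S', v = w ∨ v = d w := by
      simpa [W, hvT] using hv
    · exact ⟨d w, hdT w, hWadj w⟩
    · exact absurd (hdT w) hvT
  · by_cases hvT : v ∈ T.verts
    · exact Or.inl hvT
    · exact Or.inr (Subgraph.verts_iSup ▸ Set.mem_iUnion.mpr
        ⟨⟨v, Finset.mem_filter.mpr ⟨hv, hvT⟩⟩, by simp⟩)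
  · intro e he e' he' hce
    rcases hWedge e he with he | ⟨v, rfl⟩ <;> rcases hWedge e' he' with he' | ⟨v', rfl⟩
    · exact hinj he he' hce
    · have := hlt _ he; rw [hcol] at hce; omega
    · have := hlt _ he'; rw [hcol] at hce; omega
    · rw [hcol, hcol, add_right_inj, Fin.val_inj, τ.apply_eq_iff_eq] at hce
      rw [hce]

lemma exists_palette_coloring (T : G.Subgraph) [Finite T.edgeSet] (hk : k ≠ 0)
    (hdom : ∀ v ∉ T.verts, k ≤ (T.verts ∩ G.neighborSet v).ncard) :
    ∃ c : Sym2 V → ℕ, (∀ e, c e < T.edgeSet.ncard + k) ∧ Set.InjOn c T.edgeSet ∧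
      (∀ e ∈ T.edgeSet, c e < T.edgeSet.ncard) ∧
      ∀ v ∉ T.verts, ∀ j < k, ∃ d ∈ T.verts, G.Adj v d ∧ c s(v, d) = T.edgeSet.ncard + j := by
  classical
  set m := T.edgeSet.ncard
  have hemb (v : V) (hv : v ∉ T.verts) : Nonempty (Fin k ↪ ↥(T.verts ∩ G.neighborSet v)) := by
    have hfin := Set.finite_of_ncard_ne_zero (s := T.verts ∩ G.neighborSet v)
      (by have := hdom v hv; omega)
    have := hfin.fintype
    refine Function.Embedding.nonempty_of_card_le ?_
    rw [Fintype.card_fin, ← Nat.card_eq_fintype_card, Nat.card_coe_set_eq]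
    exact hdom v hv
  let f v hv := (hemb v hv).some
  -- `s(v, f v j)` is labelled by `(v, j)`; the labels are unique, so `partialInv` reads them back.
  let φ : {v // v ∉ T.verts} × Fin k → Sym2 V := fun p => s(p.1, f p.1 p.1.2 p.2)
  have hφ : φ.Injective := by
    rintro ⟨⟨v, hv⟩, i⟩ ⟨⟨w, hw⟩, j⟩ h
    rcases Sym2.eq_iff.mp h with ⟨hvw, hij⟩ | ⟨hvw, -⟩
    · dsimp only at hvw hij
      subst hvw
      rw [(f v hv).injective (Subtype.ext hij)]
    · dsimp only at hvw
      exact absurd (hvw ▸ (f w hw j).2.1) hv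
  let c (e : Sym2 V) : ℕ :=
    if h : e ∈ T.edgeSet then Finite.equivFin T.edgeSet ⟨e, h⟩
    else (Function.partialInv φ e).elim 0 fun p => m + p.2
  refine ⟨c, fun e => ?_, fun e he e' he' hce => ?_, fun e he => ?_, fun v hv j hj => ?_⟩
  · unfold c
    split_ifs with he
    · exact Nat.lt_add_right k (Finite.equivFin T.edgeSet ⟨e, he⟩).2
    · rcases Function.partialInv φ e with _ | ⟨-, j⟩
      · exact Nat.pos_of_ne_zero (by omega)
      · exact Nat.add_lt_add_left j.2 m
  · simp only [c, dif_pos he, dif_pos he'] at hce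
    exact congrArg Subtype.val ((Finite.equivFin _).injective (Fin.ext hce))
  · simp only [c, dif_pos he]
    exact Fin.is_lt _
  · let d := f v hv ⟨j, hj⟩
    have hvd : s(v, ↑d) ∉ T.edgeSet := fun h => hv (T.edge_vert (Subgraph.mem_edgeSet.mp h))
    refine ⟨d, d.2.1, d.2.2, ?_⟩
    simp only [c, dif_neg hvd]
    rw [show s(v, ↑d) = φ (⟨v, hv⟩, ⟨j, hj⟩) from rfl, Function.partialInv_left hφ]
    rfl

lemma rxk_le_card_add_of_isConnKDom (hk : k ≠ 0) {D : Finset V} (hD : IsConnKDom G k D) :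
    rxk G k ≤ D.card + k - 1 := by
  have : Finite ((⊤ : G.Subgraph).induce (D : Set V)).verts := D.finite_toSet.to_subtype
  obtain ⟨T, hT, hTD, hfin, hcard⟩ :=
    (connected_induce_iff.mp hD.1).exists_spanning_card_edgeSet
  have := hfin.to_subtype
  simp only [Subgraph.induce_verts, Set.ncard_coe_finset] at hTD hcard
  obtain ⟨c, hbound, hinj, hlt, hpal⟩ := exists_palette_coloring T hk (by simpa [hTD] using hD.2)
  exact Nat.sInf_le ⟨c, fun e _ => by have := hbound e; omega,
    isKRainbowColoring_of_rainbow_of_palette hT hinj hlt hpal⟩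

end

theorem stmt9_general {V : Type*} (G : SimpleGraph V)
    (k : ℕ) (hk : 2 ≤ k) (D : Finset V) (hD : IsConnKDom G k D) :
    rxk G k ≤ D.card + k - 1 ∧ rxk G k ≤ gammakc G k + k - 1 := by
  obtain ⟨D₀, hD₀card, hD₀⟩ := Nat.sInf_mem (⟨D.card, D, rfl, hD⟩ :
    {m | ∃ D' : Finset V, D'.card = m ∧ IsConnKDom G k D'}.Nonempty)
  have hk₀ : k ≠ 0 := by omega
  rw [gammakc, ← hD₀card]
  exact ⟨rxk_le_card_add_of_isConnKDom hk₀ hD, rxk_le_card_add_of_isConnKDom hk₀ hD₀⟩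

theorem stmt9 {V : Type*} [Fintype V] (G : SimpleGraph V) (hG : G.Connected)
    (k : ℕ) (hk : 2 ≤ k) (D : Finset V) (hD : IsConnKDom G k D) :
    rxk G k ≤ D.card + k - 1 ∧ rxk G k ≤ gammakc G k + k - 1 :=
  stmt9_general G k hk D hD
end

section
/- Let G be a connected graph with minimum degree at least k, and let γ_{k-1}^c(G) be the connected (k-1)-domination number of G. Then rx_k(G) ≤ γ_{k-1}^c(G) + k. -/
open SimpleGraph

/-! Let `D` be a minimum connected `(k-1)`-dominating set and `a = |D| - 1`. A spanning tree of
`D` has `a` edges, coloured `0, …, a-1`. Every vertex `v ∉ D` gets a palette of colours in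
`[a, a + k)`: all `k` of them if `v` has `k` neighbours in `D`, and otherwise `k - 1` of them,
dropping `a + k - 1` when `v` lies in a fixed maximal independent set `I` of such vertices and
`a` when it does not. Each palette colour of `v` is put on its own edge from `v` into `D`, and
all edges avoiding `D` get the extra colour `a + k`, for `|D| + k` colours in all.

Given `k` vertices, their outside part `A` hangs on the tree by pendant edges whenever their
palettes have a system of distinct representatives. By Hall this fails only if all of `A` share
one `(k-1)`-palette. Then some `s ∈ A` has a neighbour `x ∉ D` on the other side of `I` (by
maximality of `I`, or by `δ(G) ≥ k` and independence of `I`), so `x` owns a colour `t` missing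
from that palette; the path `s x d` coloured `a + k, t` reaches `D`, and the other `k - 1`
vertices of `A` use the common palette. -/

open Finset

theorem Set.Finite.exists_injOn_lt_ncard {α : Type*} {s : Set α} (hs : s.Finite) :
    ∃ f : α → ℕ, Set.InjOn f s ∧ ∀ x ∈ s, f x < s.ncard := by
  obtain ⟨f, hmaps, hinj⟩ := hs.exists_injOn_of_encard_le (t := Set.Iio s.ncard)
    (by rw [← hs.cast_ncard_eq, ← (Set.finite_Iio _).cast_ncard_eq, Set.ncard_Iio_nat])
  exact ⟨f, hinj, hmaps⟩

theorem Set.Finite.exists_surjOn_of_ncard_le {α β : Type*} [Nonempty α] [Nonempty β]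
    {s : Set α} {t : Set β} (hs : s.Finite) (ht : t.Finite) (h : t.ncard ≤ s.ncard) :
    ∃ σ : α → β, Set.SurjOn σ s t := by
  obtain ⟨g, hmaps, hinj⟩ := ht.exists_injOn_of_encard_le (t := s)
    (by rw [← ht.cast_ncard_eq, ← hs.cast_ncard_eq]; exact_mod_cast h)
  exact ⟨Function.invFunOn g t, hinj.leftInvOn_invFunOn.surjOn hmaps⟩

theorem Finset.exists_injOn_mem_of_card_le_card_biUnion {ι α : Type*} [DecidableEq α]
    [Nonempty α] (A : Finset ι) (t : ι → Finset α) (ht : ∀ i ∈ A, #A - 1 ≤ #(t i))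
    (hA : #A ≤ #(A.biUnion t)) : ∃ f : ι → α, Set.InjOn f A ∧ ∀ i ∈ A, f i ∈ t i := by
  classical
  have hall : ∀ s : Finset A, #s ≤ #(s.biUnion fun i => t i) := by
    intro s
    rcases s.eq_empty_or_nonempty with rfl | ⟨i, hi⟩
    · simp
    by_cases hs : s = univ
    · subst hs
      convert hA using 2
      · simp
      · ext; simp
    · calc #s ≤ #(t i) := by
            have := card_lt_card (ssubset_univ_iff.mpr hs)
            have := ht i i.2
            simp only [card_univ, Fintype.card_coe] at *
            omega
        _ ≤ _ := card_le_card (subset_biUnion_of_mem (fun i : A => t i) hi)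
  obtain ⟨f, hf, hft⟩ := (all_card_le_biUnion_card_iff_exists_injective _).1 hall
  refine ⟨fun i => if hi : i ∈ A then f ⟨i, hi⟩ else Classical.arbitrary _, ?_, ?_⟩
  · intro i hi j hj hij
    simp only [mem_coe] at hi hj
    exact congrArg Subtype.val (hf (by simpa [hi, hj] using hij))
  · intro i hi
    simpa [hi] using hft ⟨i, hi⟩

theorem Finset.exists_injOn_mem_of_card_le {ι α : Type*} [DecidableEq α] [Nonempty α]
    (A : Finset ι) (t : ι → Finset α) (ht : ∀ i ∈ A, #A ≤ #(t i)) :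
    ∃ f : ι → α, Set.InjOn f A ∧ ∀ i ∈ A, f i ∈ t i := by
  refine A.exists_injOn_mem_of_card_le_card_biUnion t
    (fun i hi => (ht i hi).trans' (by omega)) ?_
  rcases A.eq_empty_or_nonempty with rfl | ⟨i, hi⟩
  · simp
  · exact (ht i hi).trans (card_le_card (subset_biUnion_of_mem t hi))

namespace SimpleGraph

variable {V : Type*} {G : SimpleGraph V}

theorem exists_isIndepSet_subset_forall_exists_adj [Finite V] (s : Set V) :
    ∃ I ⊆ s, G.IsIndepSet I ∧ ∀ v ∈ s, v ∉ I → ∃ u ∈ I, G.Adj v u := by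
  obtain ⟨I, ⟨hIs, hI⟩, hmax⟩ :=
    (Set.toFinite {I : Set V | I ⊆ s ∧ G.IsIndepSet I}).exists_maximal
      ⟨∅, Set.empty_subset s, Set.pairwise_empty _⟩
  refine ⟨I, hIs, hI, fun v hv hvI => ?_⟩
  by_contra! hno
  have hins : insert v I ⊆ s ∧ G.IsIndepSet (insert v I) :=
    ⟨Set.insert_subset hv hIs, hI.insert fun u hu _ => ⟨hno u hu, fun h => hno u hu h.symm⟩⟩
  exact hvI (hmax hins (Set.subset_insert v I) (Set.mem_insert v I))

theorem exists_connected_subgraph_verts_eq [Finite V] {D : Finset V}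
    (hD : (G.induce (D : Set V)).Connected) :
    ∃ H : G.Subgraph, H.Connected ∧ H.verts = D ∧ H.edgeSet.ncard + 1 = #D := by
  classical
  have := Fintype.ofFinite V
  set K := (⊤ : G.Subgraph).induce D
  obtain ⟨T, hTle, hT⟩ := (connected_induce_iff.mp hD).coe.exists_isTree_le
  refine ⟨K.coeSubgraph (toSubgraph T hTle), (hT.connected.toSubgraph hTle).coeSubgraph,
    by simp [K], ?_⟩
  have hE : (toSubgraph T hTle).edgeSet = T.edgeSet := by ext e; induction e; simp
  rw [Subgraph.edgeSet_map, Set.ncard_image_of_injective _ (Sym2.map.injective K.hom_injective),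
    hE, ← coe_edgeFinset, Set.ncard_coe_finset, hT.card_edgeFinset]
  simp

namespace Subgraph

variable {α : Type*} {c : Sym2 V → α}

theorem Connected.exists_sup_edge {H : G.Subgraph} (hH : H.Connected)
    (hc : Set.InjOn c H.edgeSet) {a b : V} (hab : G.Adj a b) (hb : b ∈ H.verts)
    (hnew : c s(a, b) ∉ c '' H.edgeSet) :
    ∃ T : G.Subgraph, T.Connected ∧ Set.InjOn c T.edgeSet ∧ insert a H.verts ⊆ T.verts ∧
      c '' T.edgeSet = insert (c s(a, b)) (c '' H.edgeSet) := by
  have hE : (H ⊔ G.subgraphOfAdj hab).edgeSet = insert s(a, b) H.edgeSet := by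
    rw [edgeSet_sup, edgeSet_subgraphOfAdj, Set.union_singleton]
  refine ⟨H ⊔ G.subgraphOfAdj hab, connected_sup hH.preconnected
    (subgraphOfAdj_connected hab).preconnected ⟨b, hb, by simp⟩, ?_, ?_, ?_⟩
  · rw [hE, Set.injOn_insert fun h => hnew (Set.mem_image_of_mem c h)]
    exact ⟨hc, hnew⟩
  · rw [verts_sup, subgraphOfAdj_verts]
    rintro v (rfl | hv)
    · exact Or.inr (Or.inl rfl)
    · exact Or.inl hv
  · rw [hE, Set.image_insert_eq]

theorem Connected.exists_sup_pendants {ψ : V → α} (A : Finset V) {H : G.Subgraph}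
    (hH : H.Connected) (hc : Set.InjOn c H.edgeSet) (hψ : Set.InjOn ψ A)
    (hnew : ∀ v ∈ A, ψ v ∉ c '' H.edgeSet)
    (hpend : ∀ v ∈ A, ∃ d ∈ H.verts, G.Adj v d ∧ c s(v, d) = ψ v) :
    ∃ T : G.Subgraph, T.Connected ∧ Set.InjOn c T.edgeSet ∧ H.verts ⊆ T.verts ∧
      ↑A ⊆ T.verts := by
  classical
  induction A using Finset.induction_on generalizing H with
  | empty => exact ⟨H, hH, hc, subset_rfl, by simp⟩
  | @insert v A hvA ih =>
    obtain ⟨d, hd, hvd, hcd⟩ := hpend v (mem_insert_self v A)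
    obtain ⟨H', hH', hc', hsub, himg⟩ :=
      hH.exists_sup_edge hc hvd hd (hcd ▸ hnew v (mem_insert_self v A))
    have hnew' : ∀ w ∈ A, ψ w ∉ c '' H'.edgeSet := by
      intro w hw
      rw [himg, hcd, Set.mem_insert_iff, not_or]
      exact ⟨fun h => hvA (hψ (by simp [hw]) (by simp) h ▸ hw),
        hnew w (mem_insert_of_mem hw)⟩
    obtain ⟨T, hT, hcT, hH'T, hAT⟩ := ih hH' hc' (hψ.mono (by simp)) hnew' fun w hw => by
      obtain ⟨d', hd', h⟩ := hpend w (mem_insert_of_mem hw)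
      exact ⟨d', hsub (Set.mem_insert_of_mem v hd'), h⟩
    refine ⟨T, hT, hcT, fun x hx => hH'T (hsub (Set.mem_insert_of_mem v hx)), ?_⟩
    rw [coe_insert, Set.insert_subset_iff]
    exact ⟨hH'T (hsub (Set.mem_insert v _)), hAT⟩

end Subgraph

end SimpleGraph

section Palette

variable {V : Type*} (G : SimpleGraph V) (D : Finset V) (I : Set V) (a k : ℕ)

open Classical in
noncomputable def palette (v : V) : Finset ℕ :=
  if k ≤ ((D : Set V) ∩ G.neighborSet v).ncard then Ico a (a + k)
  else if v ∈ I then Ico a (a + k - 1) else Ico (a + 1) (a + k)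

variable {G D I a k}

theorem palette_subset (v : V) : palette G D I a k v ⊆ Ico a (a + k) := by
  unfold palette
  split_ifs <;> exact Ico_subset_Ico (by omega) (by omega)

theorem card_palette_mem_Icc {v : V} (hv : k - 1 ≤ ((D : Set V) ∩ G.neighborSet v).ncard) :
    #(palette G D I a k v) ∈ Set.Icc (k - 1) ((D : Set V) ∩ G.neighborSet v).ncard := by
  unfold palette
  split_ifs <;> simp only [Nat.card_Ico, Set.mem_Icc] <;> omega

theorem exists_adj_not_palette_subset (hk : 2 ≤ k)
    (hI : I ⊆ {v | v ∉ D ∧ ((D : Set V) ∩ G.neighborSet v).ncard < k})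
    (hIind : G.IsIndepSet I)
    (hImax : ∀ v ∈ {v | v ∉ D ∧ ((D : Set V) ∩ G.neighborSet v).ncard < k}, v ∉ I →
      ∃ u ∈ I, G.Adj v u)
    {v : V} (hvD : v ∉ D) (hdeg : k ≤ (G.neighborSet v).ncard)
    (hcard : #(palette G D I a k v) < k) :
    ∃ x ∉ D, G.Adj v x ∧ ¬ palette G D I a k x ⊆ palette G D I a k v := by
  have hpoor : ¬ k ≤ ((D : Set V) ∩ G.neighborSet v).ncard := by
    intro h; simp [palette, h] at hcard
  by_cases hvI : v ∈ I
  · obtain ⟨x, hvx, hxD⟩ : ∃ x ∈ G.neighborSet v, x ∉ D := by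
      by_contra! h
      exact hpoor (by rwa [Set.inter_eq_right.mpr h])
    have hxI : x ∉ I := fun hxI => hIind hvI hxI (G.ne_of_adj hvx) hvx
    refine ⟨x, hxD, hvx, fun hsub => ?_⟩
    have : a + k - 1 ∈ palette G D I a k x := by
      unfold palette; split_ifs <;> simp only [mem_Ico] <;> omega
    simpa [palette, hpoor, hvI] using hsub this
  · obtain ⟨x, hxI, hvx⟩ := hImax v ⟨hvD, not_le.mp hpoor⟩ hvI
    obtain ⟨hxD, hxpoor⟩ := hI hxI
    refine ⟨x, hxD, hvx, fun hsub => ?_⟩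
    have : a ∈ palette G D I a k x := by simp [palette, not_le.mpr hxpoor, hxI]; omega
    simpa [palette, hpoor, hvI] using hsub this

end Palette

theorem exists_coloring_of_card_palette_le {V : Type*} {G : SimpleGraph V} (D : Finset V)
    {H : G.Subgraph} (hH : H.verts ⊆ D) (f : Sym2 V → ℕ) (pal : V → Finset ℕ) (top : ℕ)
    (hf : ∀ e ∈ H.edgeSet, f e ≤ top) (hpal : ∀ v ∉ D, ∀ t ∈ pal v, t ≤ top)
    (hcard : ∀ v ∉ D, #(pal v) ≤ ((D : Set V) ∩ G.neighborSet v).ncard) :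
    ∃ c : Sym2 V → ℕ, (∀ e ∈ H.edgeSet, c e = f e) ∧
      (∀ v ∉ D, ∀ t ∈ pal v, ∃ d ∈ D, G.Adj v d ∧ c s(v, d) = t) ∧
      (∀ u w, u ∉ D → w ∉ D → c s(u, w) = top) ∧ ∀ e, c e ≤ top := by
  classical
  have hσ : ∀ v, ∃ σ : V → ℕ, v ∉ D →
      Set.SurjOn σ ((D : Set V) ∩ G.neighborSet v) (pal v) := by
    intro v
    by_cases hv : v ∈ D
    · exact ⟨0, fun h => (h hv).elim⟩
    have : Nonempty V := ⟨v⟩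
    obtain ⟨σ, hσ⟩ := (D.finite_toSet.inter_of_left _).exists_surjOn_of_ncard_le
      (pal v).finite_toSet (by rw [Set.ncard_coe_finset]; exact hcard v hv)
    exact ⟨σ, fun _ => hσ⟩
  choose σ hσ using hσ
  -- the cap at `top` only changes the junk values of `f` and `σ` off the prescribed edges
  let col : V → V → ℕ := fun u w =>
    min (if u ∈ D then (if w ∈ D then f s(u, w) else σ w u) else if w ∈ D then σ u w else top)
      top
  have hcol : ∀ u w, col u w = col w u := by
    intro u w
    simp only [col]
    split_ifs <;> simp [Sym2.eq_swap]
  refine ⟨Sym2.lift ⟨col, hcol⟩, fun e he => ?_, fun v hv t ht => ?_, fun u w hu hw => ?_,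
    fun e => ?_⟩
  · induction e using Sym2.ind with | _ u w => ?_
    have hu : u ∈ D := hH (H.edge_vert he)
    have hw : w ∈ D := hH (H.edge_vert (Subgraph.adj_symm H he))
    simpa [col, hu, hw] using hf _ he
  · obtain ⟨d, ⟨hdD : d ∈ D, hvd⟩, rfl⟩ := hσ v hv ht
    exact ⟨d, hdD, hvd, by simpa [col, hv, hdD] using hpal v hv _ ht⟩
  · simp [col, hu, hw]
  · induction e using Sym2.ind with | _ u w => exact min_le_right _ _

section Rainbow

variable {V : Type*} {G : SimpleGraph V} {D : Finset V} {H : G.Subgraph} {c : Sym2 V → ℕ}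
  {pal : V → Finset ℕ} {a k : ℕ}

theorem exists_rainbow_sup_pendants_s11
    (hc_pal : ∀ v ∉ D, ∀ t ∈ pal v, ∃ d ∈ D, G.Adj v d ∧ c s(v, d) = t)
    (hH : H.Connected) (hcH : Set.InjOn c H.edgeSet) (hDH : ↑D ⊆ H.verts)
    {A : Finset V} (hA : ∀ v ∈ A, v ∉ D) {ψ : V → ℕ} (hψ : Set.InjOn ψ A)
    (hψpal : ∀ v ∈ A, ψ v ∈ pal v) (hnew : ∀ v ∈ A, ψ v ∉ c '' H.edgeSet) :
    ∃ T : G.Subgraph, T.Connected ∧ Set.InjOn c T.edgeSet ∧ H.verts ⊆ T.verts ∧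
      ↑A ⊆ T.verts :=
  hH.exists_sup_pendants A hcH hψ hnew fun v hv =>
    let ⟨d, hd, h⟩ := hc_pal v (hA v hv) (ψ v) (hψpal v hv)
    ⟨d, hDH hd, h⟩

theorem exists_rainbow_of_card_le_card_biUnion (hH : H.Connected) (hHD : H.verts = D)
    (hcH : Set.InjOn c H.edgeSet) (hcH_lt : ∀ e ∈ H.edgeSet, c e < a)
    (hpal : ∀ v ∉ D, pal v ⊆ Ico a (a + k)) (hpal_card : ∀ v ∉ D, k - 1 ≤ #(pal v))
    (hc_pal : ∀ v ∉ D, ∀ t ∈ pal v, ∃ d ∈ D, G.Adj v d ∧ c s(v, d) = t) {A : Finset V}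
    (hA : ∀ v ∈ A, v ∉ D) (hAk : #A ≤ k) (hHall : #A ≤ #(A.biUnion pal)) :
    ∃ T : G.Subgraph, T.Connected ∧ Set.InjOn c T.edgeSet ∧ ↑D ∪ ↑A ⊆ T.verts := by
  obtain ⟨ψ, hψ, hψpal⟩ := A.exists_injOn_mem_of_card_le_card_biUnion pal
    (fun v hv => (hpal_card v (hA v hv)).trans' (by omega)) hHall
  obtain ⟨T, hT, hcT, hHT, hAT⟩ :=
    exists_rainbow_sup_pendants_s11 hc_pal hH hcH hHD.ge hA hψ hψpal fun v hv ⟨e, he, hev⟩ => by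
      have := hcH_lt e he
      have := mem_Ico.mp (hpal v (hA v hv) (hψpal v hv))
      omega
  exact ⟨T, hT, hcT, Set.union_subset (hHD ▸ hHT) hAT⟩

theorem exists_rainbow_escape (hH : H.Connected) (hHD : H.verts = D)
    (hcH : Set.InjOn c H.edgeSet) (hcH_lt : ∀ e ∈ H.edgeSet, c e < a)
    (hpal : ∀ v ∉ D, pal v ⊆ Ico a (a + k))
    (hpal_esc : ∀ v ∉ D, #(pal v) < k → ∃ x ∉ D, G.Adj v x ∧ ¬ pal x ⊆ pal v)
    (hc_pal : ∀ v ∉ D, ∀ t ∈ pal v, ∃ d ∈ D, G.Adj v d ∧ c s(v, d) = t)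
    (hc_out : ∀ u w, u ∉ D → w ∉ D → c s(u, w) = a + k) {s : V} (hs : s ∉ D)
    (hs_card : #(pal s) < k) :
    ∃ T : G.Subgraph, T.Connected ∧ Set.InjOn c T.edgeSet ∧ insert s ↑D ⊆ T.verts ∧
      ∀ t ∈ pal s, t ∉ c '' T.edgeSet := by
  obtain ⟨x, hxD, hsx, hx⟩ := hpal_esc s hs hs_card
  obtain ⟨t, htx, hts⟩ := not_subset.mp hx
  obtain ⟨d, hdD, hxd, hcd⟩ := hc_pal x hxD t htx
  have ht := mem_Ico.mp (hpal x hxD htx)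
  obtain ⟨H₁, hH₁, hcH₁, hHH₁, himg₁⟩ := hH.exists_sup_edge hcH hxd (hHD ▸ hdD) (by
    rintro ⟨e, he, hce⟩
    have := hcH_lt e he
    omega)
  obtain ⟨H₂, hH₂, hcH₂, hH₁H₂, himg₂⟩ := hH₁.exists_sup_edge hcH₁ hsx
    (hHH₁ (Set.mem_insert x _)) (by
      rw [himg₁, hc_out s x hs hxD, hcd]
      rintro (h | ⟨e, he, hce⟩)
      · omega
      · have := hcH_lt e he
        omega)
  refine ⟨H₂, hH₂, hcH₂, ?_, fun t' ht' => ?_⟩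
  · rw [← hHD]
    exact (Set.insert_subset_insert fun v hv => hHH₁ (Set.mem_insert_of_mem x hv)).trans hH₁H₂
  · have := mem_Ico.mp (hpal s hs ht')
    rw [himg₂, himg₁, hc_out s x hs hxD, hcd]
    rintro (h | h | ⟨e, he, hce⟩)
    · omega
    · exact hts (h ▸ ht')
    · have := hcH_lt e he
      omega

theorem exists_rainbow_of_card_biUnion_lt [DecidableEq V] (hH : H.Connected)
    (hHD : H.verts = D) (hcH : Set.InjOn c H.edgeSet) (hcH_lt : ∀ e ∈ H.edgeSet, c e < a)
    (hpal : ∀ v ∉ D, pal v ⊆ Ico a (a + k)) (hpal_card : ∀ v ∉ D, k - 1 ≤ #(pal v))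
    (hpal_esc : ∀ v ∉ D, #(pal v) < k → ∃ x ∉ D, G.Adj v x ∧ ¬ pal x ⊆ pal v)
    (hc_pal : ∀ v ∉ D, ∀ t ∈ pal v, ∃ d ∈ D, G.Adj v d ∧ c s(v, d) = t)
    (hc_out : ∀ u w, u ∉ D → w ∉ D → c s(u, w) = a + k) {A : Finset V}
    (hA : ∀ v ∈ A, v ∉ D) (hAk : #A ≤ k) (hHall : #(A.biUnion pal) < #A) :
    ∃ T : G.Subgraph, T.Connected ∧ Set.InjOn c T.edgeSet ∧ ↑D ∪ ↑A ⊆ T.verts := by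
  have hpal_eq : ∀ v ∈ A, pal v = A.biUnion pal := fun v hv =>
    eq_of_subset_of_card_le (subset_biUnion_of_mem pal hv)
      (by have := hpal_card v (hA v hv); omega)
  obtain ⟨s, hs⟩ : A.Nonempty := card_pos.mp (by omega)
  obtain ⟨H', hH', hcH', hsDH', hsH'⟩ := exists_rainbow_escape hH hHD hcH hcH_lt hpal hpal_esc
    hc_pal hc_out (hA s hs) (by rw [hpal_eq s hs]; omega)
  obtain ⟨ψ, hψ, hψpal⟩ := (A.erase s).exists_injOn_mem_of_card_le pal fun v hv => by
    have := hpal_card v (hA v (mem_of_mem_erase hv))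
    rw [card_erase_of_mem hs]
    omega
  have hψs : ∀ v ∈ A.erase s, ψ v ∈ pal s := fun v hv => by
    rw [hpal_eq s hs, ← hpal_eq v (mem_of_mem_erase hv)]
    exact hψpal v hv
  obtain ⟨T, hT, hcT, hH'T, hAT⟩ := exists_rainbow_sup_pendants_s11 hc_pal hH' hcH'
    ((Set.subset_insert s _).trans hsDH') (fun v hv => hA v (mem_of_mem_erase hv)) hψ hψpal
    fun v hv => hsH' _ (hψs v hv)
  refine ⟨T, hT, hcT, Set.union_subset ?_ ?_⟩
  · exact (Set.subset_insert s _).trans (hsDH'.trans hH'T)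
  · rw [← insert_erase hs, coe_insert, Set.insert_subset_iff]
    exact ⟨hH'T (hsDH' (Set.mem_insert s _)), hAT⟩

theorem isKRainbowColoring_of_palettes (hH : H.Connected) (hHD : H.verts = D)
    (hcH : Set.InjOn c H.edgeSet) (hcH_lt : ∀ e ∈ H.edgeSet, c e < a)
    (hpal : ∀ v ∉ D, pal v ⊆ Ico a (a + k)) (hpal_card : ∀ v ∉ D, k - 1 ≤ #(pal v))
    (hpal_esc : ∀ v ∉ D, #(pal v) < k → ∃ x ∉ D, G.Adj v x ∧ ¬ pal x ⊆ pal v)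
    (hc_pal : ∀ v ∉ D, ∀ t ∈ pal v, ∃ d ∈ D, G.Adj v d ∧ c s(v, d) = t)
    (hc_out : ∀ u w, u ∉ D → w ∉ D → c s(u, w) = a + k) :
    IsKRainbowColoring G k c := by
  classical
  intro S hS
  have hA : ∀ v ∈ S \ D, v ∉ D := fun v hv => (mem_sdiff.mp hv).2
  have hAk : #(S \ D) ≤ k := hS ▸ card_le_card sdiff_subset
  obtain ⟨T, hT, hcT, hDT⟩ : ∃ T : G.Subgraph, T.Connected ∧ Set.InjOn c T.edgeSet ∧
      ↑D ∪ ↑(S \ D) ⊆ T.verts := by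
    rcases le_or_gt #(S \ D) #((S \ D).biUnion pal) with hHall | hHall
    · exact exists_rainbow_of_card_le_card_biUnion hH hHD hcH hcH_lt hpal hpal_card hc_pal hA
        hAk hHall
    · exact exists_rainbow_of_card_biUnion_lt hH hHD hcH hcH_lt hpal hpal_card hpal_esc hc_pal
        hc_out hA hAk hHall
  refine ⟨T, hT, subset_trans ?_ hDT, hcT⟩
  rw [← coe_union, union_sdiff_self_eq_union]
  exact coe_subset.mpr subset_union_right

end Rainbow

theorem rxk_le {V : Type*} {G : SimpleGraph V} {k m : ℕ} {c : Sym2 V → ℕ}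
    (hc : IsKRainbowColoring G k c) (hm : ∀ e ∈ G.edgeSet, c e < m) : rxk G k ≤ m :=
  Nat.sInf_le ⟨c, hm, hc⟩

theorem exists_isConnKDom_card_eq_gammakc {V : Type*} {G : SimpleGraph V} {k : ℕ}
    (h : ∃ D : Finset V, IsConnKDom G k D) :
    ∃ D : Finset V, IsConnKDom G k D ∧ #D = gammakc G k := by
  obtain ⟨D, hD, hDk⟩ :=
    Nat.sInf_mem (s := {m | ∃ D : Finset V, #D = m ∧ IsConnKDom G k D})
      (let ⟨D, hD⟩ := h; ⟨#D, D, rfl, hD⟩)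
  exact ⟨D, hDk, hD⟩

theorem stmt11_general {V : Type*} [Fintype V] (G : SimpleGraph V)
    (k : ℕ) (hk : 2 ≤ k)
    (hδ : ∀ v : V, k ≤ (G.neighborSet v).ncard)
    (hex : ∃ D : Finset V, IsConnKDom G (k - 1) D) :
    rxk G k ≤ gammakc G (k - 1) + k := by
  obtain ⟨D, ⟨hDconn, hDdom⟩, hDcard⟩ := exists_isConnKDom_card_eq_gammakc hex
  obtain ⟨H, hH, hHD, hHcard⟩ := exists_connected_subgraph_verts_eq hDconn
  obtain ⟨f, hf, hf_lt⟩ := H.edgeSet.toFinite.exists_injOn_lt_ncard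
  obtain ⟨I, hIs, hIind, hImax⟩ := G.exists_isIndepSet_subset_forall_exists_adj
    {v | v ∉ D ∧ ((D : Set V) ∩ G.neighborSet v).ncard < k}
  obtain ⟨c, hcH, hc_pal, hc_out, hc_le⟩ := exists_coloring_of_card_palette_le D hHD.le f
    (palette G D I (#D - 1) k) (#D - 1 + k) (fun e he => by have := hf_lt e he; omega)
    (fun v _ t ht => by have := mem_Ico.mp (palette_subset v ht); omega)
    (fun v hv => (card_palette_mem_Icc (hDdom v hv)).2)
  have hrainbow : IsKRainbowColoring G k c :=
    isKRainbowColoring_of_palettes hH hHD (hf.congr fun e he => (hcH e he).symm)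
      (fun e he => by have := hf_lt e he; rw [hcH e he]; omega) (fun v _ => palette_subset v)
      (fun v hv => (card_palette_mem_Icc (hDdom v hv)).1)
      (fun v hv => exists_adj_not_palette_subset hk hIs hIind hImax hv (hδ v)) hc_pal hc_out
  calc rxk G k ≤ #D + k := rxk_le hrainbow fun e _ => by have := hc_le e; omega
    _ = gammakc G (k - 1) + k := by rw [hDcard]

theorem stmt11 {V : Type*} [Fintype V] (G : SimpleGraph V) (hG : G.Connected)
    (k : ℕ) (hk : 2 ≤ k)
    (hδ : ∀ v : V, k ≤ (G.neighborSet v).ncard)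
    (hex : ∃ D : Finset V, IsConnKDom G (k - 1) D) :
    rxk G k ≤ gammakc G (k - 1) + k :=
  stmt11_general G k hk hδ hex
end
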